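/- In a complete Boolean algebra A, for every infinite maximal ideal-independent set X there exists a family Y (namely Y = X) with sup Y = 1 and sup Y' ≠ 1 for every finite Y' ⊆ Y and |Y| = |X|; consequently the pseudo-intersection number 𝔭(A) is at most the cardinality of every infinite maximal ideal-independent subset of A. -/
import Mathlib


def IdealIndependent {A : Type*} [BooleanAlgebra A] (X : Set A) : Prop :=
  ⊥ ∉ X ∧ ⊤ ∉ X ∧
    ∀ x ∈ X, ∀ F : Finset A, ↑F ⊆ X \ {x} → ¬ x ≤ F.sup id

/-- The pseudo-intersection number of a complete Boolean algebra. -/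
noncomputable def pseudoIntersectionNumber (A : Type*) [CompleteBooleanAlgebra A] : Cardinal :=
  sInf {c : Cardinal | ∃ Y : Set A, sSup Y = ⊤ ∧
    (∀ F : Finset A, ↑F ⊆ Y → F.sup id ≠ ⊤) ∧ Cardinal.mk Y = c}

theorem stmt15 {A : Type*} [CompleteBooleanAlgebra A] (X : Set A)
    (hX : IdealIndependent X)
    (hmax : ∀ Y : Set A, IdealIndependent Y → X ⊆ Y → Y = X)
    (hinf : X.Infinite) :
    (∃ Y : Set A, sSup Y = ⊤ ∧
      (∀ F : Finset A, ↑F ⊆ Y → F.sup id ≠ ⊤) ∧ Cardinal.mk Y = Cardinal.mk X) ∧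
    pseudoIntersectionNumber A ≤ Cardinal.mk X := by
  classical
  obtain ⟨hbot, htop, hind⟩ := hX
  -- finite sups are not ⊤
  have hfin : ∀ F : Finset A, ↑F ⊆ X → F.sup id ≠ ⊤ := by
    intro F hF hsup
    obtain ⟨x, hxX, hxF⟩ := hinf.exists_notMem_finset F
    exact hind x hxX F (fun a ha => ⟨hF ha, fun h => hxF (h ▸ ha)⟩) (hsup ▸ le_top)
  -- the supremum of X is ⊤
  have hsup : sSup X = ⊤ := by
    by_contra hne
    set s := sSup X with hs
    have hsc_ne_bot : sᶜ ≠ ⊥ := by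
      simpa [compl_eq_bot] using hne
    have hscX : sᶜ ∉ X := by
      intro h
      apply hsc_ne_bot
      have h1 : sᶜ ≤ s := le_sSup h
      have h2 : sᶜ ≤ s ⊓ sᶜ := le_inf h1 le_rfl
      exact le_bot_iff.mp (by simpa using h2)
    have hII : IdealIndependent (X ∪ {sᶜ}) := by
      refine ⟨?_, ?_, ?_⟩
      · rintro (h | h)
        · exact hbot h
        · exact hsc_ne_bot (Set.mem_singleton_iff.mp h).symm
      · rintro (h | h)
        · exact htop h
        · obtain ⟨x, hx⟩ := hinf.nonempty
          have hsb : s = ⊥ := by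
            have := (Set.mem_singleton_iff.mp h).symm
            simpa [compl_eq_top] using this
          exact hbot (by
            have : x ≤ (⊥ : A) := hsb ▸ le_sSup hx
            rwa [le_bot_iff.mp this] at hx)
      · intro x hx F hF hle
        rcases hx with hx | hx
        · -- x ∈ X
          set F' := F.erase sᶜ with hF'
          have hF'X : ↑F' ⊆ X \ {x} := by
            intro a ha
            obtain ⟨hane, haF⟩ := Finset.mem_erase.mp ha
            rcases hF haF with ⟨(h1 | h1), h2⟩
            · exact ⟨h1, h2⟩
            · exact absurd (Set.mem_singleton_iff.mp h1) hane
          have hsupF : F.sup id ≤ F'.sup id ⊔ sᶜ := by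
            apply Finset.sup_le
            intro a ha
            by_cases hasc : a = sᶜ
            · exact hasc ▸ le_sup_right
            · exact le_trans (Finset.le_sup (f := id) (Finset.mem_erase.mpr ⟨hasc, ha⟩))
                le_sup_left
          have hxs : x ≤ s := le_sSup hx
          have hdisj : Disjoint x sᶜ := disjoint_compl_right.mono_left hxs
          have : x ≤ F'.sup id :=
            hdisj.left_le_of_le_sup_right (le_trans hle hsupF)
          exact hind x hx F' hF'X this
        · -- x = sᶜ
          have hxeq : x = sᶜ := Set.mem_singleton_iff.mp hx
          have hFX : ↑F ⊆ X := by
            intro a ha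
            rcases hF ha with ⟨(h1 | h1), h2⟩
            · exact h1
            · exact absurd (Set.mem_singleton_iff.mpr
                ((Set.mem_singleton_iff.mp h1).trans hxeq.symm)) h2
          have hFs : F.sup id ≤ s := Finset.sup_le fun a ha => le_sSup (hFX ha)
          apply hsc_ne_bot
          have h3 : sᶜ ≤ s ⊓ sᶜ := le_inf (le_trans (hxeq ▸ hle) hFs) le_rfl
          exact le_bot_iff.mp (by simpa using h3)
    have := hmax (X ∪ {sᶜ}) hII Set.subset_union_left
    exact hscX (this ▸ Set.mem_union_right X rfl)
  refine ⟨⟨X, hsup, hfin, rfl⟩, ?_⟩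
  exact csInf_le' ⟨X, hsup, hfin, rfl⟩
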